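/- arXiv:2403.00819 — 2 statements merged into one kernel-verified Lean document; each statement's English description precedes it below -/
import Mathlib

section
/- Let V and Ṽ be independent standard normal random variables and Ḡ(x) = P(|V| − |Ṽ| > x). Then Ḡ(x) is asymptotically equivalent to (2/π)·e^{−x²/2}·x^{−2} as x → ∞; that is, lim_{x→∞} x² · e^{x²/2} · Ḡ(x) = 2/π. -/
open MeasureTheory ProbabilityTheory Filter Real Set Topology
open scoped ENNReal NNReal

noncomputable def sphi (u : ℝ) : ℝ := (Real.sqrt (2 * π))⁻¹ * Real.exp (-u ^ 2 / 2)

noncomputable def sPhib (t : ℝ) : ℝ := ∫ u in Ioi t, sphi u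

lemma sphi_eq (u : ℝ) : gaussianPDFReal 0 1 u = sphi u := by
  simp [gaussianPDFReal, sphi]

lemma sphi_nonneg (u : ℝ) : 0 ≤ sphi u := by
  rw [← sphi_eq]; exact gaussianPDFReal_nonneg 0 1 u

lemma sphi_even (u : ℝ) : sphi (-u) = sphi u := by simp [sphi]

lemma continuous_sphi : Continuous sphi := by
  unfold sphi; fun_prop

lemma integrable_sphi : Integrable sphi := by
  have := integrable_gaussianPDFReal 0 1
  simpa [funext sphi_eq] using this

lemma sphi_hasDeriv (u : ℝ) : HasDerivAt sphi (-u * sphi u) u := by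
  unfold sphi
  have h : HasDerivAt (fun u : ℝ => -u ^ 2 / 2) (-u) u := by
    have := ((hasDerivAt_pow 2 u).neg).div_const 2
    simpa using this.congr_deriv (by ring)
  have := (h.exp).const_mul (Real.sqrt (2 * π))⁻¹
  refine this.congr_deriv ?_
  ring

lemma sphi_tendsto_zero : Tendsto sphi atTop (𝓝 0) := by
  unfold sphi
  rw [show (0:ℝ) = (Real.sqrt (2*π))⁻¹ * 0 by ring]
  apply Tendsto.const_mul
  apply Real.tendsto_exp_atBot.comp
  have h2 : Tendsto (fun k : ℝ => k ^ 2) atTop atTop := tendsto_pow_atTop two_ne_zero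
  have := (tendsto_neg_atBot_iff.mpr h2).atBot_div_const (by norm_num : (0:ℝ) < 2)
  simpa [div_eq_mul_inv] using this


lemma integrableOn_mul_sphi (t : ℝ) : IntegrableOn (fun u => u * sphi u) (Ioi t) := by
  have h : Integrable (fun u : ℝ => u * Real.exp (-(1/2 : ℝ) * u ^ 2)) :=
    integrable_mul_exp_neg_mul_sq (by norm_num)
  have : Integrable (fun u : ℝ => u * sphi u) := by
    have := h.const_mul (Real.sqrt (2 * π))⁻¹
    refine this.congr (Eventually.of_forall fun u => ?_)
    unfold sphi
    ring_nf
  exact this.integrableOn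

lemma integral_mul_sphi {t : ℝ} (ht : 0 < t) : ∫ u in Ioi t, u * sphi u = sphi t := by
  have hderiv : ∀ u ∈ Ici t, HasDerivAt (fun u => -sphi u) (u * sphi u) u := by
    intro u _
    exact (sphi_hasDeriv u).neg.congr_deriv (by ring)
  have := integral_Ioi_of_hasDerivAt_of_tendsto' hderiv (integrableOn_mul_sphi t)
    (sphi_tendsto_zero.neg.congr (by simp) |>.congr (fun _ => rfl))
  rw [this]
  simp


lemma sPhib_nonneg (t : ℝ) : 0 ≤ sPhib t :=
  setIntegral_nonneg measurableSet_Ioi fun u _ => sphi_nonneg u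

lemma mills_upper {t : ℝ} (ht : 0 < t) : sPhib t ≤ sphi t / t := by
  have h1 : sPhib t ≤ ∫ u in Ioi t, (u / t) * sphi u := by
    apply setIntegral_mono_on integrable_sphi.integrableOn
      (((integrableOn_mul_sphi t).div_const t).congr
        (Eventually.of_forall (fun u => by ring)))
      measurableSet_Ioi
    intro u hu
    have h2 : (1:ℝ) ≤ u / t := (one_le_div ht).mpr (le_of_lt hu)
    nlinarith [sphi_nonneg u]
  calc sPhib t ≤ ∫ u in Ioi t, (u / t) * sphi u := h1
    _ = (∫ u in Ioi t, u * sphi u) / t := by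
        rw [← integral_div]
        exact setIntegral_congr_fun measurableSet_Ioi fun u _ => by ring
    _ = sphi t / t := by rw [integral_mul_sphi ht]

lemma integral_one_add_inv_sq {t : ℝ} (ht : 0 < t) :
    ∫ u in Ioi t, (1 + (u ^ 2)⁻¹) * sphi u = sphi t / t := by
  have hderiv : ∀ u ∈ Ici t, HasDerivAt (fun u => -(sphi u / u)) ((1 + (u ^ 2)⁻¹) * sphi u) u := by
    intro u hu
    have hu0 : u ≠ 0 := (lt_of_lt_of_le ht hu).ne'
    have := ((sphi_hasDeriv u).div (hasDerivAt_id u) hu0).neg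
    refine this.congr_deriv ?_
    simp only [id]
    field_simp
    ring
  have htend : Tendsto (fun u => -(sphi u / u)) atTop (𝓝 0) := by
    have := (sphi_tendsto_zero.div_atTop tendsto_id).neg
    simpa using this
  have hpos : ∀ u ∈ Ioi t, 0 ≤ (1 + (u ^ 2)⁻¹) * sphi u := by
    intro u hu
    have : (0:ℝ) ≤ 1 + (u ^ 2)⁻¹ := by positivity
    exact mul_nonneg this (sphi_nonneg u)
  have := integral_Ioi_of_hasDerivAt_of_nonneg' hderiv hpos htend
  rw [this]; ring

lemma integrableOn_one_add_inv_sq {t : ℝ} (ht : 0 < t) :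
    IntegrableOn (fun u => (1 + (u ^ 2)⁻¹) * sphi u) (Ioi t) := by
  have hderiv : ∀ u ∈ Ici t, HasDerivAt (fun u => -(sphi u / u)) ((1 + (u ^ 2)⁻¹) * sphi u) u := by
    intro u hu
    have hu0 : u ≠ 0 := (lt_of_lt_of_le ht hu).ne'
    have := ((sphi_hasDeriv u).div (hasDerivAt_id u) hu0).neg
    refine this.congr_deriv ?_
    simp only [id]
    field_simp
    ring
  have htend : Tendsto (fun u => -(sphi u / u)) atTop (𝓝 0) := by
    have := (sphi_tendsto_zero.div_atTop tendsto_id).neg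
    simpa using this
  refine integrableOn_Ioi_deriv_of_nonneg' hderiv (fun u hu => ?_) htend
  have : (0:ℝ) ≤ 1 + (u ^ 2)⁻¹ := by positivity
  exact mul_nonneg this (sphi_nonneg u)

lemma mills_lower {t : ℝ} (ht : 0 < t) : sphi t * t / (t ^ 2 + 1) ≤ sPhib t := by
  have key : sphi t / t ≤ (1 + (t ^ 2)⁻¹) * sPhib t := by
    rw [← integral_one_add_inv_sq ht]
    have : (1 + (t ^ 2)⁻¹) * sPhib t = ∫ u in Ioi t, (1 + (t ^ 2)⁻¹) * sphi u := by
      rw [MeasureTheory.integral_const_mul]; rfl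
    rw [this]
    apply setIntegral_mono_on (integrableOn_one_add_inv_sq ht)
      (integrable_sphi.integrableOn.const_mul _) measurableSet_Ioi
    intro u hu
    have h1 : (u ^ 2)⁻¹ ≤ (t ^ 2)⁻¹ := by
      apply inv_anti₀ (by positivity)
      nlinarith [le_of_lt (mem_Ioi.mp hu)]
    nlinarith [sphi_nonneg u]
  have h2 : (0:ℝ) < 1 + (t ^ 2)⁻¹ := by positivity
  rw [div_le_iff₀ (by positivity)] at key ⊢
  have ht2 : (0:ℝ) < t ^ 2 := by positivity
  have h3 := mul_le_mul_of_nonneg_right key (le_of_lt ht2)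
  have h4 : (1 + (t ^ 2)⁻¹) * t ^ 2 = t ^ 2 + 1 := by field_simp
  calc sphi t * t ≤ (1 + (t ^ 2)⁻¹) * sPhib t * t * t := by nlinarith [key]
    _ = sPhib t * (t ^ 2 + 1) := by field_simp

lemma sphi_abs (u : ℝ) : sphi |u| = sphi u := by simp [sphi, sq_abs]

noncomputable def sF (t : ℝ) : ℝ := (gaussianReal 0 1 {v : ℝ | t < |v|}).toReal

lemma gauss_Ioi (t : ℝ) : gaussianReal 0 1 (Ioi t) = ENNReal.ofReal (sPhib t) := by
  rw [gaussianReal_apply_eq_integral 0 one_ne_zero]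
  congr 1
  exact setIntegral_congr_fun measurableSet_Ioi fun u _ => sphi_eq u

lemma gauss_Iio (t : ℝ) : gaussianReal 0 1 (Iio (-t)) = ENNReal.ofReal (sPhib t) := by
  rw [gaussianReal_apply_eq_integral 0 one_ne_zero]
  congr 1
  have h1 : ∫ u in Iic (-t), gaussianPDFReal 0 1 u = ∫ u in Iic (-t), sphi u :=
    setIntegral_congr_fun measurableSet_Iic fun u _ => sphi_eq u
  have h2 : ∫ u in Ioi t, sphi (-u) = ∫ u in Iic (-t), sphi u := integral_comp_neg_Ioi t sphi
  have h3 : ∫ u in Iio (-t), gaussianPDFReal 0 1 u = ∫ u in Iic (-t), gaussianPDFReal 0 1 u := by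
    rw [← integral_Iic_eq_integral_Iio]
  rw [h3, h1, ← h2]
  unfold sPhib
  exact setIntegral_congr_fun measurableSet_Ioi fun u _ => sphi_even u

lemma sF_eq {t : ℝ} (ht : 0 ≤ t) : sF t = 2 * sPhib t := by
  have hset : {v : ℝ | t < |v|} = Iio (-t) ∪ Ioi t := by
    ext v
    simp only [mem_setOf_eq, mem_union, mem_Iio, mem_Ioi]
    rw [lt_abs]
    constructor
    · rintro (h | h)
      · right; exact h
      · left; linarith
    · rintro (h | h)
      · right; linarith
      · left; exact h
  have hdisj : Disjoint (Iio (-t)) (Ioi t) :=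
    (Iio_disjoint_Ici (by linarith : -t ≤ t)).mono_right Ioi_subset_Ici_self
  unfold sF
  rw [hset, measure_union hdisj measurableSet_Ioi, gauss_Iio, gauss_Ioi,
    ← ENNReal.ofReal_add (sPhib_nonneg t) (sPhib_nonneg t),
    ENNReal.toReal_ofReal (by have := sPhib_nonneg t; linarith)]
  ring

lemma measurable_tail : Measurable (fun t : ℝ => gaussianReal 0 1 {v : ℝ | t < |v|}) := by
  apply Antitone.measurable
  intro t t' h
  exact measure_mono (fun v hv => lt_of_le_of_lt h hv)

lemma rep {Ω : Type*} [MeasurableSpace Ω] (P : Measure Ω)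
    [IsProbabilityMeasure P] (V V' : Ω → ℝ)
    (hm : Measurable V) (hm' : Measurable V')
    (hV : P.map V = gaussianReal 0 1) (hV' : P.map V' = gaussianReal 0 1)
    (hind : IndepFun V V' P) (x : ℝ) :
    (P {ω | x < |V ω| - |V' ω|}).toReal = 2 * ∫ u in Ioi (0:ℝ), sF (x + u) * sphi u := by
  set μ := gaussianReal 0 1 with hμ
  have hs : MeasurableSet {p : ℝ × ℝ | x < |p.1| - |p.2|} :=
    measurableSet_lt measurable_const ((measurable_fst.abs).sub (measurable_snd.abs))
  have hmap : P.map (fun ω => (V ω, V' ω)) = μ.prod μ := by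
    have := (indepFun_iff_map_prod_eq_prod_map_map hm.aemeasurable hm'.aemeasurable).mp hind
    rw [this, hV, hV']
  have h1 : P {ω | x < |V ω| - |V' ω|} = (μ.prod μ) {p : ℝ × ℝ | x < |p.1| - |p.2|} := by
    rw [← hmap, Measure.map_apply (hm.prodMk hm') hs]
    rfl
  have h2 : (μ.prod μ) {p : ℝ × ℝ | x < |p.1| - |p.2|}
      = ∫⁻ u, μ {v : ℝ | x + |u| < |v|} ∂μ := by
    rw [Measure.prod_apply_symm hs]
    congr 1
    ext u
    congr 1
    ext v
    simp only [mem_preimage, mem_setOf_eq]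
    constructor <;> intro h <;> linarith
  have hmeas : Measurable (fun u : ℝ => μ {v : ℝ | x + |u| < |v|}) :=
    measurable_tail.comp (measurable_const.add measurable_abs)
  have h3 : ((μ.prod μ) {p : ℝ × ℝ | x < |p.1| - |p.2|}).toReal
      = ∫ u, sF (x + |u|) ∂μ := by
    rw [h2, ← integral_toReal hmeas.aemeasurable
      (Eventually.of_forall fun u => measure_lt_top μ _)]
    rfl
  have h4 : ∫ u, sF (x + |u|) ∂μ = ∫ u, sF (x + |u|) * sphi u := by
    rw [hμ, gaussianReal_of_var_ne_zero 0 one_ne_zero]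
    have hpdf : (gaussianPDF 0 1) = fun u => ((gaussianPDFReal 0 1 u).toNNReal : ℝ≥0∞) := rfl
    rw [hpdf, integral_withDensity_eq_integral_smul
      ((measurable_gaussianPDFReal 0 1).real_toNNReal)]
    congr 1
    ext u
    rw [NNReal.smul_def, smul_eq_mul, Real.coe_toNNReal _ (gaussianPDFReal_nonneg 0 1 u),
      sphi_eq]
    ring
  have h5 : ∫ u, sF (x + |u|) * sphi u = 2 * ∫ u in Ioi (0:ℝ), sF (x + u) * sphi u := by
    have : (fun u : ℝ => sF (x + |u|) * sphi u) = fun u => sF (x + |u|) * sphi |u| := by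
      ext u; rw [sphi_abs]
    rw [this]
    exact integral_comp_abs (f := fun w => sF (x + w) * sphi w)
  rw [h1, h3, h4, h5]

lemma tendsto_div_sq_zero (s : ℝ) : Tendsto (fun x : ℝ => s / x) atTop (𝓝 0) :=
  tendsto_const_nhds.div_atTop tendsto_id

lemma tendsto_exp_aux (s : ℝ) :
    Tendsto (fun x : ℝ => Real.exp (-(s / x) ^ 2 / 2)) atTop (𝓝 1) := by
  have h : Tendsto (fun x : ℝ => -(s / x) ^ 2 / 2) atTop (𝓝 0) := by
    have := (((tendsto_div_sq_zero s).pow 2).neg).div_const 2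
    simpa using this
  have := Real.continuous_exp.continuousAt.tendsto.comp h
  rw [Real.exp_zero] at this
  exact this

lemma tendsto_frac1 {s : ℝ} (hs : 0 < s) :
    Tendsto (fun x : ℝ => x ^ 2 / (x ^ 2 + s)) atTop (𝓝 1) := by
  have hden : Tendsto (fun x : ℝ => x ^ 2 + s) atTop atTop :=
    tendsto_atTop_add_const_right _ s (tendsto_pow_atTop two_ne_zero)
  have h0 : Tendsto (fun x : ℝ => s / (x ^ 2 + s)) atTop (𝓝 0) :=
    tendsto_const_nhds.div_atTop hden
  have heq : ∀ᶠ x : ℝ in atTop, 1 - s / (x ^ 2 + s) = x ^ 2 / (x ^ 2 + s) := by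
    filter_upwards [eventually_gt_atTop 0] with x hx
    have : x ^ 2 + s ≠ 0 := by positivity
    field_simp
    ring
  have h1 : Tendsto (fun _ : ℝ => (1:ℝ)) atTop (𝓝 1) := tendsto_const_nhds
  have := h1.sub h0
  simp only [sub_zero] at this
  exact Tendsto.congr' heq this

lemma tendsto_frac2 {s : ℝ} (hs : 0 < s) :
    Tendsto (fun x : ℝ => (x ^ 2 + s) * x ^ 2 / ((x ^ 2 + s) ^ 2 + x ^ 2)) atTop (𝓝 1) := by
  have hr : Tendsto (fun x : ℝ => s / x ^ 2) atTop (𝓝 0) :=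
    tendsto_const_nhds.div_atTop (tendsto_pow_atTop two_ne_zero)
  have hq : Tendsto (fun x : ℝ => 1 / x ^ 2) atTop (𝓝 0) :=
    tendsto_const_nhds.div_atTop (tendsto_pow_atTop two_ne_zero)
  have hone : Tendsto (fun _ : ℝ => (1:ℝ)) atTop (𝓝 1) := tendsto_const_nhds
  have hnum : Tendsto (fun x : ℝ => 1 + s / x ^ 2) atTop (𝓝 1) := by
    have := hone.add hr
    simpa using this
  have hden : Tendsto (fun x : ℝ => (1 + s / x ^ 2) ^ 2 + 1 / x ^ 2) atTop (𝓝 1) := by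
    have := (hnum.pow 2).add hq
    simpa using this
  have hmain : Tendsto (fun x : ℝ => (1 + s / x ^ 2) / ((1 + s / x ^ 2) ^ 2 + 1 / x ^ 2))
      atTop (𝓝 1) := by
    have := hnum.div hden one_ne_zero
    rw [div_one] at this
    exact this
  refine Tendsto.congr' ?_ hmain
  filter_upwards [eventually_gt_atTop 0] with x hx
  have hx0 : x ≠ 0 := hx.ne'
  have h1 : (x ^ 2 + s) ^ 2 + x ^ 2 ≠ 0 := by positivity
  field_simp

lemma tendsto_A {s : ℝ} (hs : 0 < s) :
    Tendsto (fun x : ℝ => x * Real.exp (x ^ 2 / 2) * sPhib (x + s / x)) atTop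
      (𝓝 ((Real.sqrt (2 * π))⁻¹ * Real.exp (-s))) := by
  set c : ℝ := (Real.sqrt (2 * π))⁻¹ with hc
  have key : ∀ x : ℝ, 0 < x →
      Real.exp (x ^ 2 / 2) * Real.exp (-(x + s / x) ^ 2 / 2)
        = Real.exp (-s) * Real.exp (-(s / x) ^ 2 / 2) := by
    intro x hx
    rw [← Real.exp_add, ← Real.exp_add]
    congr 1
    have hx0 : x ≠ 0 := hx.ne'
    field_simp
    ring
  have hxs : ∀ x : ℝ, 0 < x → x + s / x = (x ^ 2 + s) / x := by
    intro x hx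
    have hx0 : x ≠ 0 := hx.ne'
    field_simp
  -- upper function
  have hhigh : Tendsto (fun x : ℝ => x * Real.exp (x ^ 2 / 2) * (sphi (x + s / x) / (x + s / x)))
      atTop (𝓝 (c * Real.exp (-s))) := by
    have heq : ∀ᶠ x : ℝ in atTop,
        c * Real.exp (-s) * (Real.exp (-(s / x) ^ 2 / 2) * (x ^ 2 / (x ^ 2 + s)))
          = x * Real.exp (x ^ 2 / 2) * (sphi (x + s / x) / (x + s / x)) := by
      filter_upwards [eventually_gt_atTop 0] with x hx
      have hx0 : x ≠ 0 := hx.ne'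
      have hxs2 : x ^ 2 + s ≠ 0 := by positivity
      have h1 : x * Real.exp (x ^ 2 / 2) * (sphi (x + s / x) / (x + s / x))
          = (Real.exp (x ^ 2 / 2) * Real.exp (-(x + s / x) ^ 2 / 2)) * (c * (x / (x + s / x))) := by
        unfold sphi
        rw [← hc]
        ring
      rw [h1, key x hx]
      have h2 : x / (x + s / x) = x ^ 2 / (x ^ 2 + s) := by
        rw [hxs x hx, div_div_eq_mul_div]
        ring_nf
      rw [h2]
      ring
    refine Tendsto.congr' heq ?_
    have := Tendsto.const_mul (c * Real.exp (-s)) ((tendsto_exp_aux s).mul (tendsto_frac1 hs))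
    simpa using this
  -- lower function
  have hlow : Tendsto (fun x : ℝ =>
      x * Real.exp (x ^ 2 / 2) * (sphi (x + s / x) * (x + s / x) / ((x + s / x) ^ 2 + 1)))
      atTop (𝓝 (c * Real.exp (-s))) := by
    have heq : ∀ᶠ x : ℝ in atTop,
        c * Real.exp (-s) * (Real.exp (-(s / x) ^ 2 / 2)
          * ((x ^ 2 + s) * x ^ 2 / ((x ^ 2 + s) ^ 2 + x ^ 2)))
          = x * Real.exp (x ^ 2 / 2) * (sphi (x + s / x) * (x + s / x) / ((x + s / x) ^ 2 + 1)) := by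
      filter_upwards [eventually_gt_atTop 0] with x hx
      have hx0 : x ≠ 0 := hx.ne'
      have hxs2 : x ^ 2 + s ≠ 0 := by positivity
      have hden : (x ^ 2 + s) ^ 2 + x ^ 2 ≠ 0 := by positivity
      have h1 : x * Real.exp (x ^ 2 / 2) * (sphi (x + s / x) * (x + s / x) / ((x + s / x) ^ 2 + 1))
          = (Real.exp (x ^ 2 / 2) * Real.exp (-(x + s / x) ^ 2 / 2))
            * (c * (x * (x + s / x) / ((x + s / x) ^ 2 + 1))) := by
        unfold sphi
        rw [← hc]
        ring
      rw [h1, key x hx]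
      have hden2 : ((x ^ 2 + s) / x) ^ 2 + 1 ≠ 0 := by positivity
      have h2 : x * (x + s / x) / ((x + s / x) ^ 2 + 1)
          = (x ^ 2 + s) * x ^ 2 / ((x ^ 2 + s) ^ 2 + x ^ 2) := by
        rw [hxs x hx]
        field_simp
      rw [h2]
      ring
    refine Tendsto.congr' heq ?_
    have := Tendsto.const_mul (c * Real.exp (-s)) ((tendsto_exp_aux s).mul (tendsto_frac2 hs))
    simpa using this
  -- squeeze
  refine tendsto_of_tendsto_of_tendsto_of_le_of_le' hlow hhigh ?_ ?_
  · filter_upwards [eventually_gt_atTop 0] with x hx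
    have ht : 0 < x + s / x := by positivity
    have hfac : 0 ≤ x * Real.exp (x ^ 2 / 2) := by positivity
    exact mul_le_mul_of_nonneg_left (mills_lower ht) hfac
  · filter_upwards [eventually_gt_atTop 0] with x hx
    have ht : 0 < x + s / x := by positivity
    have hfac : 0 ≤ x * Real.exp (x ^ 2 / 2) := by positivity
    exact mul_le_mul_of_nonneg_left (mills_upper ht) hfac

lemma tendsto_K {s : ℝ} (hs : 0 < s) :
    Tendsto (fun x : ℝ => x * Real.exp (x ^ 2 / 2) * sPhib (x + s / x) * sphi (s / x)) atTop
      (𝓝 (Real.exp (-s) / (2 * π))) := by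
  have hB : Tendsto (fun x : ℝ => sphi (s / x)) atTop (𝓝 (sphi 0)) := by
    exact continuous_sphi.continuousAt.tendsto.comp (tendsto_div_sq_zero s)
  have hsphi0 : sphi 0 = (Real.sqrt (2 * π))⁻¹ := by simp [sphi]
  rw [hsphi0] at hB
  have := (tendsto_A hs).mul hB
  have hval : (Real.sqrt (2 * π))⁻¹ * Real.exp (-s) * (Real.sqrt (2 * π))⁻¹
      = Real.exp (-s) / (2 * π) := by
    rw [div_eq_mul_inv, ← Real.mul_self_sqrt (by positivity : (0:ℝ) ≤ 2 * π)]
    field_simp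
    rw [Real.sqrt_sq (Real.sqrt_nonneg _)]
  rw [hval] at this
  exact this

lemma exp_key {s x : ℝ} (hx : 0 < x) :
    Real.exp (x ^ 2 / 2) * Real.exp (-(x + s / x) ^ 2 / 2)
      = Real.exp (-s) * Real.exp (-(s / x) ^ 2 / 2) := by
  rw [← Real.exp_add, ← Real.exp_add]
  congr 1
  have hx0 : x ≠ 0 := hx.ne'
  field_simp
  ring

lemma sphi_le (u : ℝ) : sphi u ≤ (Real.sqrt (2 * π))⁻¹ := by
  unfold sphi
  have h1 : Real.exp (-u ^ 2 / 2) ≤ 1 := Real.exp_le_one_iff.mpr (by nlinarith [sq_nonneg u])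
  have h2 : (0:ℝ) ≤ (Real.sqrt (2 * π))⁻¹ := by positivity
  nlinarith

lemma antitone_sPhib : Antitone sPhib := by
  intro t t' h
  exact setIntegral_mono_set integrable_sphi.integrableOn
    (Eventually.of_forall sphi_nonneg)
    (HasSubset.Subset.eventuallyLE (Ioi_subset_Ioi h))

lemma measurable_sPhib : Measurable sPhib := antitone_sPhib.measurable

lemma K_bound {x s : ℝ} (hx : 1 ≤ x) (hs : 0 < s) :
    x * Real.exp (x ^ 2 / 2) * sPhib (x + s / x) * sphi (s / x)
      ≤ (2 * π)⁻¹ * Real.exp (-s) := by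
  have hx0 : 0 < x := lt_of_lt_of_le one_pos hx
  have ht : 0 < x + s / x := by positivity
  have hxt : x ≤ x + s / x := by
    have : 0 ≤ s / x := by positivity
    linarith
  set c : ℝ := (Real.sqrt (2 * π))⁻¹ with hc
  have hc0 : 0 ≤ c := by positivity
  have h1 : sPhib (x + s / x) ≤ sphi (x + s / x) / x := by
    calc sPhib (x + s / x) ≤ sphi (x + s / x) / (x + s / x) := mills_upper ht
      _ ≤ sphi (x + s / x) / x := by gcongr; exact sphi_nonneg _
  have h2 : sphi (s / x) ≤ c := sphi_le _
  have hA : 0 ≤ x * Real.exp (x ^ 2 / 2) := by positivity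
  have step1 : x * Real.exp (x ^ 2 / 2) * sPhib (x + s / x) * sphi (s / x)
      ≤ x * Real.exp (x ^ 2 / 2) * (sphi (x + s / x) / x) * c := by
    apply mul_le_mul
    · exact mul_le_mul_of_nonneg_left h1 hA
    · exact h2
    · exact sphi_nonneg _
    · exact mul_nonneg hA (div_nonneg (sphi_nonneg _) hx0.le)
  have step2 : x * Real.exp (x ^ 2 / 2) * (sphi (x + s / x) / x) * c
      = (2 * π)⁻¹ * (Real.exp (x ^ 2 / 2) * Real.exp (-(x + s / x) ^ 2 / 2)) := by
    have hx0' : x ≠ 0 := hx0.ne'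
    have hcc : c * c = (2 * π)⁻¹ := by
      rw [hc, ← mul_inv, Real.mul_self_sqrt (by positivity : (0:ℝ) ≤ 2 * π)]
    have hxcancel : x * Real.exp (x ^ 2 / 2) * (sphi (x + s / x) / x)
        = Real.exp (x ^ 2 / 2) * sphi (x + s / x) := by
      field_simp
    rw [hxcancel]
    unfold sphi
    rw [← hc, ← hcc]
    ring
  have step3 : (2 * π)⁻¹ * (Real.exp (x ^ 2 / 2) * Real.exp (-(x + s / x) ^ 2 / 2))
      ≤ (2 * π)⁻¹ * Real.exp (-s) := by
    rw [exp_key hx0]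
    have h3 : Real.exp (-(s / x) ^ 2 / 2) ≤ 1 :=
      Real.exp_le_one_iff.mpr (by nlinarith [sq_nonneg (s / x)])
    have h4 : (0:ℝ) ≤ (2 * π)⁻¹ := by positivity
    have h5 : Real.exp (-s) * Real.exp (-(s / x) ^ 2 / 2) ≤ Real.exp (-s) :=
      mul_le_of_le_one_right (Real.exp_pos _).le h3
    exact mul_le_mul_of_nonneg_left h5 h4
  linarith

lemma tendsto_main : Tendsto (fun x : ℝ => ∫ s in Ioi (0:ℝ),
    4 * (x * Real.exp (x ^ 2 / 2) * sPhib (x + s / x) * sphi (s / x))) atTop (𝓝 (2 / π)) := by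
  have hval : ∫ s in Ioi (0:ℝ), 4 * (Real.exp (-s) / (2 * π)) = 2 / π := by
    have h1 : (fun s : ℝ => 4 * (Real.exp (-s) / (2 * π))) = fun s => (2 / π) * Real.exp (-s) := by
      ext s
      have : π ≠ 0 := pi_ne_zero
      field_simp
      ring
    rw [h1, MeasureTheory.integral_const_mul, integral_exp_neg_Ioi_zero, mul_one]
  rw [← hval]
  apply tendsto_integral_filter_of_dominated_convergence
    (bound := fun s => 4 * ((2 * π)⁻¹ * Real.exp (-s)))
  · refine Eventually.of_forall (fun x => ?_)
    apply Measurable.aestronglyMeasurable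
    have h1 : Measurable fun s : ℝ => x + s / x := by fun_prop
    have h2 : Measurable fun s : ℝ => sPhib (x + s / x) := measurable_sPhib.comp h1
    have h3 : Measurable fun s : ℝ => sphi (s / x) :=
      continuous_sphi.measurable.comp (by fun_prop)
    exact (((measurable_const.mul h2).mul h3).const_mul 4)
  · filter_upwards [eventually_ge_atTop (1:ℝ)] with x hx
    rw [ae_restrict_iff' measurableSet_Ioi]
    refine Eventually.of_forall (fun s hs => ?_)
    have hs0 : 0 < s := hs
    have hx0 : (0:ℝ) < x := lt_of_lt_of_le one_pos hx
    have hnn : 0 ≤ x * Real.exp (x ^ 2 / 2) * sPhib (x + s / x) * sphi (s / x) :=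
      mul_nonneg (mul_nonneg (by positivity) (sPhib_nonneg _)) (sphi_nonneg _)
    rw [Real.norm_of_nonneg (by linarith : (0:ℝ) ≤ 4 * (x * Real.exp (x ^ 2 / 2) * sPhib (x + s / x) * sphi (s / x)))]
    have := K_bound hx hs0
    linarith
  · have h0 : IntegrableOn (fun s : ℝ => Real.exp (-1 * s)) (Ioi (0:ℝ)) :=
      exp_neg_integrableOn_Ioi 0 one_pos
    refine (h0.const_mul (4 * (2 * π)⁻¹)).congr (Eventually.of_forall fun s => by ring_nf)
  · rw [ae_restrict_iff' measurableSet_Ioi]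
    refine Eventually.of_forall (fun s hs => ?_)
    exact (tendsto_K hs).const_mul 4

/-- For independent standard normals `V, Ṽ` and
`Ḡ(x) = P(|V| - |Ṽ| > x)`, one has `Ḡ(x) ≍ (2/π) e^{-x²/2} x^{-2}` as `x → ∞`,
i.e. `x² e^{x²/2} Ḡ(x) → 2/π`. -/
theorem survival_function_tail_asymptotics {Ω : Type*} [MeasurableSpace Ω] (P : Measure Ω)
    [IsProbabilityMeasure P] (V V' : Ω → ℝ)
    (hm : Measurable V) (hm' : Measurable V')
    (hV : P.map V = gaussianReal 0 1) (hV' : P.map V' = gaussianReal 0 1)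
    (hind : IndepFun V V' P) :
    Tendsto (fun x : ℝ => x^2 * Real.exp (x^2/2) * (P {ω | x < |V ω| - |V' ω|}).toReal)
      atTop (𝓝 (2/π)) := by
  refine Tendsto.congr' ?_ tendsto_main
  filter_upwards [eventually_gt_atTop (0:ℝ)] with x hx
  set g : ℝ → ℝ := fun u => 2 * sPhib (x + u) * sphi u with hg
  have hx0 : x ≠ 0 := hx.ne'
  have hG : (P {ω | x < |V ω| - |V' ω|}).toReal = 2 * ∫ u in Ioi (0:ℝ), g u := by
    rw [rep P V V' hm hm' hV hV' hind x]
    congr 1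
    refine setIntegral_congr_fun measurableSet_Ioi (fun u hu => ?_)
    have hu0 : (0:ℝ) < u := hu
    rw [hg]
    simp only
    rw [sF_eq (by linarith : (0:ℝ) ≤ x + u)]
  have hsub : ∫ s in Ioi (0:ℝ), g (x⁻¹ * s) = x * ∫ u in Ioi (0:ℝ), g u := by
    have := integral_comp_mul_left_Ioi g 0 (inv_pos.mpr hx)
    simpa [inv_inv] using this
  have hptwise : ∀ s : ℝ, 4 * (x * Real.exp (x ^ 2 / 2) * sPhib (x + s / x) * sphi (s / x))
      = (2 * x * Real.exp (x ^ 2 / 2)) * g (x⁻¹ * s) := by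
    intro s
    rw [hg]
    simp only
    rw [inv_mul_eq_div]
    ring
  calc ∫ s in Ioi (0:ℝ), 4 * (x * Real.exp (x ^ 2 / 2) * sPhib (x + s / x) * sphi (s / x))
      = ∫ s in Ioi (0:ℝ), (2 * x * Real.exp (x ^ 2 / 2)) * g (x⁻¹ * s) := by
        exact setIntegral_congr_fun measurableSet_Ioi (fun s _ => hptwise s)
    _ = (2 * x * Real.exp (x ^ 2 / 2)) * ∫ s in Ioi (0:ℝ), g (x⁻¹ * s) :=
        MeasureTheory.integral_const_mul _ _
    _ = (2 * x * Real.exp (x ^ 2 / 2)) * (x * ∫ u in Ioi (0:ℝ), g u) := by rw [hsub]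
    _ = x ^ 2 * Real.exp (x ^ 2 / 2) * (2 * ∫ u in Ioi (0:ℝ), g u) := by ring
    _ = x ^ 2 * Real.exp (x ^ 2 / 2) * (P {ω | x < |V ω| - |V' ω|}).toReal := by rw [hG]
end

section
/- Let b_n = √(2 log n) − log(π·log n)/√(2 log n) for n ≥ 2. Then lim_{n→∞} (π/2) · b_n² · e^{b_n²/2} / n = 1; that is, the sequence b_n asymptotically solves the equation n = (π/2)·b²·e^{b²/2} up to a factor tending to one. -/
open MeasureTheory ProbabilityTheory Filter Real Set Topology

lemma log_pi_pow_div_tendsto (k : ℕ) :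
    Tendsto (fun x : ℝ => Real.log (π * x) ^ k / x) atTop (𝓝 0) := by
  have h0 : Tendsto (fun x : ℝ => Real.log x ^ k / x) atTop (𝓝 0) := by
    have := Real.tendsto_pow_log_div_mul_add_atTop 1 0 k one_ne_zero
    simpa using this
  have hpi : Tendsto (fun x : ℝ => π * x) atTop atTop :=
    Tendsto.const_mul_atTop Real.pi_pos tendsto_id
  have h1 : Tendsto (fun x : ℝ => π * (Real.log (π * x) ^ k / (π * x))) atTop (𝓝 (π * 0)) :=
    (h0.comp hpi).const_mul π
  rw [mul_zero] at h1
  refine h1.congr' ?_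
  filter_upwards [eventually_gt_atTop 0] with x hx
  have hpx : π * x ≠ 0 := by positivity
  field_simp

lemma aux_tendsto :
    Tendsto (fun x : ℝ =>
        (1 - Real.log (π * x) / (2 * x)) ^ 2 * Real.exp (Real.log (π * x) ^ 2 / (4 * x)))
      atTop (𝓝 1) := by
  have h1 : Tendsto (fun x : ℝ => Real.log (π * x) / (2 * x)) atTop (𝓝 0) := by
    have := (log_pi_pow_div_tendsto 1).const_mul (1/2 : ℝ)
    rw [mul_zero] at this
    refine this.congr fun x => ?_
    simp; ring
  have h2 : Tendsto (fun x : ℝ => Real.log (π * x) ^ 2 / (4 * x)) atTop (𝓝 0) := by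
    have := (log_pi_pow_div_tendsto 2).const_mul (1/4 : ℝ)
    rw [mul_zero] at this
    refine this.congr fun x => ?_
    ring
  have hA : Tendsto (fun x : ℝ => (1 - Real.log (π * x) / (2 * x)) ^ 2) atTop (𝓝 1) := by
    have := ((tendsto_const_nhds.sub h1).pow 2 :
      Tendsto (fun x : ℝ => ((1 : ℝ) - Real.log (π * x) / (2 * x)) ^ 2) atTop (𝓝 ((1 - 0) ^ 2)))
    simpa using this
  have hB : Tendsto (fun x : ℝ => Real.exp (Real.log (π * x) ^ 2 / (4 * x))) atTop (𝓝 1) := by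
    have := (Real.continuous_exp.tendsto 0).comp h2
    simpa [Function.comp_def] using this
  simpa using hA.mul hB

/-- With `b_n = √(2 log n) - log(π log n)/√(2 log n)`,
`(π/2) b_n² e^{b_n²/2} / n → 1` as `n → ∞`. -/
theorem b_n_asymptotically_solves :
    Tendsto (fun n : ℕ =>
        (π/2) * (Real.sqrt (2 * Real.log (n:ℝ))
            - Real.log (π * Real.log (n:ℝ)) / Real.sqrt (2 * Real.log (n:ℝ)))^2
          * Real.exp ((Real.sqrt (2 * Real.log (n:ℝ))
            - Real.log (π * Real.log (n:ℝ)) / Real.sqrt (2 * Real.log (n:ℝ)))^2 / 2)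
          / (n:ℝ))
      atTop (𝓝 1) := by
  have hlog : Tendsto (fun n : ℕ => Real.log (n : ℝ)) atTop atTop :=
    Real.tendsto_log_atTop.comp tendsto_natCast_atTop_atTop
  have h := aux_tendsto.comp hlog
  refine h.congr' ?_
  filter_upwards [eventually_ge_atTop 2] with n hn
  have hn1 : (1 : ℝ) < (n : ℝ) := by exact_mod_cast Nat.lt_of_lt_of_le one_lt_two hn
  have hn0 : (0 : ℝ) < (n : ℝ) := by linarith
  set L := Real.log (n : ℝ) with hLdef
  have hL : 0 < L := Real.log_pos hn1
  set c := Real.log (π * L) with hcdef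
  set s := Real.sqrt (2 * L) with hsdef
  have hs2 : s ^ 2 = 2 * L := Real.sq_sqrt (by linarith)
  have hs0 : 0 < s := Real.sqrt_pos.mpr (by linarith)
  have hpL : 0 < π * L := by positivity
  have hb : (s - c / s) ^ 2 = 2 * L - 2 * c + c ^ 2 / (2 * L) := by
    rw [← hs2]
    field_simp
    ring
  have hexp : Real.exp ((2 * L - 2 * c + c ^ 2 / (2 * L)) / 2)
      = (n : ℝ) * (π * L)⁻¹ * Real.exp (c ^ 2 / (4 * L)) := by
    have : (2 * L - 2 * c + c ^ 2 / (2 * L)) / 2 = L + (-c) + c ^ 2 / (4 * L) := by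
      field_simp
      ring
    rw [this, Real.exp_add, Real.exp_add, Real.exp_log hn0, Real.exp_neg,
      Real.exp_log hpL]
  simp only [Function.comp]
  simp only [← hLdef, ← hcdef]
  rw [hb, hexp]
  have hLne : L ≠ 0 := ne_of_gt hL
  have hnne : (n : ℝ) ≠ 0 := ne_of_gt hn0
  have hpine : π ≠ 0 := ne_of_gt Real.pi_pos
  field_simp
  ring
end
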